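/- Let q(x,y,z) = x² + y² + z² + xy + xz + yz ∈ ℂ[x,y,z] and let D(u,v) = a₁b₁a₂² + a₁²a₂b₂ + c₁²a₂c₂ + b₁c₁b₂² + b₁²b₂c₂ + a₁c₁c₂² for u = (a₁,b₁,c₁), v = (a₂,b₂,c₂). For all nonzero vectors u, v ∈ ℂ³∖{0} satisfying q(u) = 0, q(v) = 0 and D(u,v) = 0, the 3×6 Jacobian matrix of the three polynomials (q(u), q(v), D(u,v)) with respect to the six variables (a₁,b₁,c₁,a₂,b₂,c₂), evaluated at (u,v), has rank 3. -/

import Mathlib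

open MvPolynomial

/-- `q(a₁,b₁,c₁) = a₁² + b₁² + c₁² + a₁b₁ + a₁c₁ + b₁c₁`, the conic obtained by substituting
`[1:1:1]` for the first point in the apolarity polynomial of the Klein quartic; here in the
variables `a₁ = X 0`, `b₁ = X 1`, `c₁ = X 2` of `ℂ[a₁,b₁,c₁,a₂,b₂,c₂]`. -/
noncomputable def qFirst : MvPolynomial (Fin 6) ℂ :=
  X 0 ^ 2 + X 1 ^ 2 + X 2 ^ 2 + X 0 * X 1 + X 0 * X 2 + X 1 * X 2

/-- The same conic in the variables `a₂ = X 3`, `b₂ = X 4`, `c₂ = X 5`. -/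
noncomputable def qSecond : MvPolynomial (Fin 6) ℂ :=
  X 3 ^ 2 + X 4 ^ 2 + X 5 ^ 2 + X 3 * X 4 + X 3 * X 5 + X 4 * X 5

/-- The bidegree `(2,2)` apolarity polynomial of the Klein quartic,
`D = a₁b₁a₂² + a₁²a₂b₂ + c₁²a₂c₂ + b₁c₁b₂² + b₁²b₂c₂ + a₁c₁c₂²`. -/
noncomputable def kleinApolarityPoly : MvPolynomial (Fin 6) ℂ :=
  X 0 * X 1 * X 3 ^ 2 + X 0 ^ 2 * X 3 * X 4 + X 2 ^ 2 * X 3 * X 5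
    + X 1 * X 2 * X 4 ^ 2 + X 1 ^ 2 * X 4 * X 5 + X 0 * X 2 * X 5 ^ 2

/-! The first two rows of the Jacobian are `(∇q(u), 0)` and `(0, ∇q(v))`, both nonzero because the
conic `q` is nondegenerate, so the rank can only drop where `∇ᵤD ∥ ∇q(u)` and `∇ᵥD ∥ ∇q(v)`, that
is, where two cross products vanish. Together with `q(u)` and `q(v)`, the coordinates of these
cross products generate an ideal containing every product `uᵢ³ vⱼ⁵`, so `u = 0` or `v = 0`. The
equations are invariant under permuting the coordinates of `u` and `v` cyclically and under
exchanging `u` and `v`, so two explicit ideal membership certificates cover all nine products. -/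

open Matrix

section

variable {K : Type*} [Field K]

theorem eq_zero_and_eq_zero_of_cross_ne_zero {g h : Fin 3 → K} (hgh : g ⨯₃ h ≠ 0) {s t : K}
    (hst : s • g + t • h = 0) : s = 0 ∧ t = 0 := by
  have hli := crossProduct_ne_zero_iff_linearIndependent.mp hgh
  exact LinearIndependent.pair_iff.mp hli s t hst

theorem rank_append_rows_eq_three {g g' h h' : Fin 3 → K} (hg : g ≠ 0) (hg' : g' ≠ 0)
    (hh : ¬(g ⨯₃ h = 0 ∧ g' ⨯₃ h' = 0)) :
    (of ![Fin.append g (0 : Fin 3 → K), Fin.append 0 g', Fin.append h h'] :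
      Matrix (Fin 3) (Fin 6) K).rank = 3 := by
  refine LinearIndependent.rank_matrix (Fintype.linearIndependent_iff.mpr fun c hc => ?_)
  simp only [Fin.sum_univ_three] at hc
  have hleft : c 0 • g + c 2 • h = 0 := funext fun k => by
    simpa using congrFun hc (Fin.castAdd 3 k)
  have hright : c 1 • g' + c 2 • h' = 0 := funext fun k => by
    simpa [-Fin.natAdd_eq_addNat] using congrFun hc (Fin.natAdd 3 k)
  rcases not_and_or.mp hh with hgh | hgh
  · obtain ⟨h0, h2⟩ := eq_zero_and_eq_zero_of_cross_ne_zero hgh hleft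
    have h1 : c 1 = 0 := by simpa [h2, hg'] using hright
    intro i; fin_cases i <;> assumption
  · obtain ⟨h1, h2⟩ := eq_zero_and_eq_zero_of_cross_ne_zero hgh hright
    have h0 : c 0 = 0 := by simpa [h2, hg] using hleft
    intro i; fin_cases i <;> assumption

def conic (u : Fin 3 → K) : K :=
  u 0 ^ 2 + u 1 ^ 2 + u 2 ^ 2 + u 0 * u 1 + u 0 * u 2 + u 1 * u 2

def conicGrad (u : Fin 3 → K) : Fin 3 → K :=
  ![2 * u 0 + u 1 + u 2, u 0 + 2 * u 1 + u 2, u 0 + u 1 + 2 * u 2]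

/-- The gradient of `D(·, v)` at `u`. Since `D(u, v) = D(v, u)`, the gradient of `D(u, ·)` at `v`
is `apolarGrad v u`. -/
def apolarGrad (u v : Fin 3 → K) : Fin 3 → K :=
  ![u 1 * v 0 ^ 2 + 2 * u 0 * v 0 * v 1 + u 2 * v 2 ^ 2,
    u 0 * v 0 ^ 2 + u 2 * v 1 ^ 2 + 2 * u 1 * v 1 * v 2,
    2 * u 2 * v 0 * v 2 + u 1 * v 1 ^ 2 + u 0 * v 2 ^ 2]

theorem conicGrad_ne_zero [NeZero (2 : K)] {u : Fin 3 → K} (hu : u ≠ 0) : conicGrad u ≠ 0 := by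
  contrapose! hu
  have e₀ := congrFun hu 0
  have e₁ := congrFun hu 1
  have e₂ := congrFun hu 2
  simp only [conicGrad, cons_val_zero, cons_val_one, cons_val_two, head_cons, tail_cons,
    Pi.zero_apply] at e₀ e₁ e₂
  have hsum : (2 : K) * 2 * (u 0 + u 1 + u 2) = 0 := by linear_combination e₀ + e₁ + e₂
  have hs : u 0 + u 1 + u 2 = 0 :=
    (mul_eq_zero.mp hsum).resolve_left (mul_ne_zero two_ne_zero two_ne_zero)
  ext i
  fin_cases i
  · exact (by linear_combination e₀ - hs : u 0 = 0)
  · exact (by linear_combination e₁ - hs : u 1 = 0)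
  · exact (by linear_combination e₂ - hs : u 2 = 0)

/-- Points of `q(u) = q(v) = 0` where `∇D` is parallel to `∇q` in both factors. -/
structure IsCritical (u v : Fin 3 → K) : Prop where
  conic_left : conic u = 0
  conic_right : conic v = 0
  cross_left : conicGrad u ⨯₃ apolarGrad u v = 0
  cross_right : conicGrad v ⨯₃ apolarGrad v u = 0

namespace IsCritical

variable {a b c x y z : K}

theorem symm {u v : Fin 3 → K} (h : IsCritical u v) : IsCritical v u :=
  ⟨h.conic_right, h.conic_left, h.cross_right, h.cross_left⟩

theorem rotate (h : IsCritical ![a, b, c] ![x, y, z]) : IsCritical ![b, c, a] ![y, z, x] := by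
  obtain ⟨hu, hv, hc, hc'⟩ := h
  refine ⟨?_, ?_, ?_, ?_⟩ <;>
    simp only [conic, conicGrad, apolarGrad, cross_apply, cons_val_zero, cons_val_one,
      cons_val_two, head_cons, tail_cons, cons_eq_zero_iff, zero_empty, and_true]
      at hu hv hc hc' ⊢
  · linear_combination hu
  · linear_combination hv
  · exact ⟨by linear_combination hc.2.1, by linear_combination hc.2.2, by linear_combination hc.1⟩
  · exact ⟨by linear_combination hc'.2.1, by linear_combination hc'.2.2,
      by linear_combination hc'.1⟩

variable [CharZero K]

/- The cofactors solve the linear system for ideal membership in bidegree `(3, 5)`, where the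
ideal already contains every monomial. -/
theorem cube_mul_pow_five_eq_zero (h : IsCritical ![a, b, c] ![x, y, z]) :
    a ^ 3 * x ^ 5 = 0 := by
  obtain ⟨hu, hv, hc, hc'⟩ := h
  simp only [conic, conicGrad, apolarGrad, cross_apply, cons_val_zero, cons_val_one,
    cons_val_two, head_cons, tail_cons, cons_eq_zero_iff, zero_empty, and_true] at hu hv hc hc'
  obtain ⟨e₀, e₁, e₂⟩ := hc
  obtain ⟨f₀, f₁, f₂⟩ := hc'
  linear_combination
    (a*x^5 + 17358317/12914832*a*x^3*y^2 + 39270607/19372248*a*x^3*y*z +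
      9982585/12914832*a*x^3*z^2 + 40833697/38744496*a*x^2*y^3 + 70741367/38744496*a*x^2*y^2*z -
      4962437/5534928*a*x^2*y*z^2 - 55368139/38744496*a*x^2*z^3 + 16854029/38744496*a*x*y^4 +
      76690591/38744496*a*x*y^3*z + 12715709/9686124*a*x*y^2*z^2 - 11316181/38744496*a*x*y*z^3 -
      17769019/38744496*a*x*z^4 - 16798/18207*a*y^3*z^2 - 1992437/922488*a*y^2*z^3 -
      37818035/19372248*a*y*z^4 - 8153587/6457416*a*z^5 - b*x^5 + 7849283/38744496*b*x^3*y^2 -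
      246811/6457416*b*x^3*y*z - 34368463/38744496*b*x^3*z^2 - 23726855/38744496*b*x^2*y^3 -
      28704295/38744496*b*x^2*y^2*z - 4926569/38744496*b*x^2*y*z^2 + 49846043/38744496*b*x^2*z^3 -
      64875289/38744496*b*x*y^4 - 20513993/12914832*b*x*y^3*z - 3938975/6457416*b*x*y^2*z^2 +
      2684093/2279088*b*x*y*z^3 + 23871271/38744496*b*x*z^4 - 16798/18207*b*y^5 -
      15746707/19372248*b*y^4*z - 3273/113288*b*y^3*z^2 + 8204263/9686124*b*y^2*z^3 +
      12010253/6457416*b*y*z^4 + 8285017/6457416*b*z^5 - c*x^5 + 13606777/19372248*c*x^3*y^2 +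
      7008451/19372248*c*x^3*y*z - 3472547/922488*c*x^3*z^2 + 1580795/807177*c*x^2*y^3 -
      1629679/19372248*c*x^2*y^2*z - 3991336/2421531*c*x^2*y*z^2 - 64777/4843062*c*x^2*z^3 +
      21875929/19372248*c*x*y^4 - 2525861/9686124*c*x*y^3*z - 21426973/6457416*c*x*y^2*z^2 -
      4079611/2767464*c*x*y*z^3 - 5023897/2421531*c*x*z^4 + 13047235/19372248*c*y^5 -
      3226/127449*c*y^4*z - 6316229/9686124*c*y^3*z^2 + 48760/142443*c*y^2*z^3 +
      7028741/6457416*c*y*z^4 + 24713723/19372248*c*z^5) * hu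
    + (-22187759/12914832*a*b^2*x*y^2 - 10337427/4304944*a*b^2*x*y*z -
      24813703/19372248*a*b^2*x*z^2 + 106061/922488*a*b^2*y^3 + 2740480/2421531*a*b^2*y^2*z +
      72622981/38744496*a*b^2*y*z^2 + 10830881/5534928*a*b^2*z^3 + a*b*c*x^3 - a*b*c*x^2*y -
      a*b*c*x^2*z - 7462883/4843062*a*b*c*x*y^2 - 22933507/9686124*a*b*c*x*y*z +
      21201583/9686124*a*b*c*x*z^2 + 8696549/19372248*a*b*c*y^3 + 10646789/6457416*a*b*c*y^2*z +
      19739905/19372248*a*b*c*y*z^2 + 6703379/19372248*a*b*c*z^3 - 63864439/38744496*a*c^2*x*y^2 -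
      5171339/1844976*a*c^2*x*y*z + 6323431/4843062*a*c^2*x*z^2 + 8929217/19372248*a*c^2*y^3 -
      1013827/4843062*a*c^2*y^2*z + 75833885/38744496*a*c^2*y*z^2 + 1353887/679728*a*c^2*z^3 +
      b^3*x^3 - b^3*x^2*y - b^3*x^2*z - 1334657/3228708*b^3*x*y^2 + 31712039/38744496*b^3*x*y*z +
      3306031/12914832*b^3*x*z^2 + 21738515/12914832*b^3*y^3 + 72220153/38744496*b^3*y^2*z -
      13331029/9686124*b^3*y*z^2 - 27635143/19372248*b^3*z^3 + 2*b^2*c*x^3 - 2*b^2*c*x^2*y -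
      2*b^2*c*x^2*z - 4025215/38744496*b^2*c*x*y^2 + 38745535/9686124*b^2*c*x*y*z +
      297830317/38744496*b^2*c*x*z^2 + 31505347/38744496*b^2*c*y^3 - 1849129/38744496*b^2*c*y^2*z -
      189055651/38744496*b^2*c*y*z^2 - 129737113/38744496*b^2*c*z^3 + 2*b*c^2*x^3 - 2*b*c^2*x^2*y -
      2*b*c^2*x^2*z - 99595/461244*b*c^2*x*y^2 + 83704183/38744496*b*c^2*x*y*z +
      240269033/38744496*b*c^2*x*z^2 - 7829341/12914832*b*c^2*y^3 - 10900441/38744496*b*c^2*y^2*z -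
      3613598/2421531*b*c^2*y*z^2 - 24791633/9686124*b*c^2*z^3 + c^3*x^3 - c^3*x^2*y - c^3*x^2*z -
      25659941/38744496*c^3*x*y^2 + 640189/1614354*c^3*x*y*z + 21623293/5534928*c^3*x*z^2 -
      14223427/38744496*c^3*y^3 + 28755611/38744496*c^3*y^2*z - 7038233/38744496*c^3*y*z^2 -
      448111/263568*c^3*z^3) * hv
    + (51916667/38744496*a*x*y^2 + 10480727/4843062*a*x*y*z + 4932493/5534928*a*x*z^2 +
      13047235/19372248*a*y^3 + 6957179/9686124*a*y^2*z - 14793/43928*a*y*z^2 -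
      2612919/2152472*a*z^3 - 270217/4843062*b*x*y^2 - 43875455/38744496*b*x*y*z -
      6607823/12914832*b*x*z^2 - 8848181/12914832*b*y^3 - 9428449/5534928*b*y^2*z -
      5453737/2421531*b*y*z^2 - 32535631/19372248*b*z^3 + 1504331/3228708*c*x*y^2 +
      3483947/9686124*c*x*y*z + 6609185/19372248*c*x*z^2 + 313511/1139544*c*y^3 +
      8427593/19372248*c*y^2*z - 3844909/19372248*c*y*z^2 + 1782719/19372248*c*z^3) * e₀
    + (-263521/2767464*a*x*y^2 - 6911407/12914832*a*x*y*z + 7555421/38744496*a*x*z^2 -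
      4825837/38744496*a*y^3 - 27926819/38744496*a*y^2*z - 11085437/9686124*a*y*z^2 -
      1999043/1614354*a*z^3 + 8166601/38744496*b*x*y^2 - 7164739/38744496*b*x*y*z +
      3333653/4843062*b*x*z^2 + 6791681/38744496*b*y^3 + 668869/1076236*b*y^2*z +
      2860201/6457416*b*y*z^2 - 2904493/2039184*b*z^3 - 75329/461244*c*x*y^2 +
      783875/2039184*c*x*y*z + 7604171/12914832*c*x*z^2 + 8841617/19372248*c*y^3 +
      1621855/1383732*c*y^2*z - 833971/4304944*c*y*z^2 - 20656795/38744496*c*z^3) * e₁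
    + (-7839031/38744496*b*x*y*z + 369809/12914832*b*x*z^2 - 43488229/38744496*b*y*z^2 -
      40042799/38744496*b*z^3 + 10260797/19372248*c*x*y^2 + 7030883/5534928*c*x*y*z +
      96328207/38744496*c*x*z^2 + 1049745/4304944*c*y^3 + 5039723/9686124*c*y^2*z -
      29483/48552*c*y*z^2 - 39084469/38744496*c*z^3) * e₂
    + (5653/1383732*a*x*y^2 - 2652301/19372248*a*x*y*z - 286231/2421531*a*x*z^2 +
      2400785/12914832*a*y^3 + 2144081/12914832*a*y^2*z + 506477/2279088*a*y*z^2 +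
      117685/5534928*a*z^3 + 42353/253232*b*x*y^2 + 84713/4843062*b*x*y*z - 1038935/4304944*b*x*z^2
      + 5068561/12914832*b*y^3 - 41025/1076236*b*y^2*z + 169087/1844976*b*y*z^2 -
      99289/1383732*b*z^3 - 30463/759696*c*x*y^2 + 4681529/19372248*c*x*y*z - 112573/790704*c*x*z^2
      + 325385/2152472*c*y^3 - 1214525/12914832*c*y^2*z - 233633/4843062*c*y*z^2 -
      949889/12914832*c*z^3) * f₀
    + (76457/461244*b*z^3 + 57523/345933*c*y*z^2 + 259361/1076236*c*z^3) * f₁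

theorem cube_mul_pow_five_eq_zero' (h : IsCritical ![a, b, c] ![x, y, z]) :
    a ^ 3 * y ^ 5 = 0 := by
  obtain ⟨hu, hv, hc, hc'⟩ := h
  simp only [conic, conicGrad, apolarGrad, cross_apply, cons_val_zero, cons_val_one,
    cons_val_two, head_cons, tail_cons, cons_eq_zero_iff, zero_empty, and_true] at hu hv hc hc'
  obtain ⟨e₀, e₁, e₂⟩ := hc
  obtain ⟨f₀, f₁, f₂⟩ := hc'
  linear_combination
    (-7350493/12914832*a*x^3*y^2 - 3866713/1844976*a*x^3*y*z - 28329383/38744496*a*x^3*z^2 +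
      7992361/12914832*a*x^2*y^3 - 11064511/12914832*a*x^2*y^2*z + 176777/197676*a*x^2*y*z^2 +
      28393633/38744496*a*x^2*z^3 - 2859431/6457416*a*x*y^4 + 5975951/38744496*a*x*y^3*z +
      10869617/9686124*a*x*y^2*z^2 + 1646357/807177*a*x*y*z^3 - 1657675/9686124*a*x*z^4 + a*y^5 +
      42263219/38744496*a*y^3*z^2 + 65795777/38744496*a*y^2*z^3 + 5424607/6457416*a*y*z^4 +
      37950565/38744496*a*z^5 - 4622421/4304944*b*x^3*y^2 - 781525/922488*b*x^3*y*z +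
      38935909/38744496*b*x^3*z^2 - 48073115/38744496*b*x^2*y^3 + 1250671/38744496*b*x^2*y^2*z +
      1098451/5534928*b*x^2*y*z^2 - 23431973/38744496*b*x^2*z^3 - 21808111/38744496*b*x*y^4 -
      725773/679728*b*x*y^3*z - 43780823/19372248*b*x*y^2*z^2 - 8095445/2279088*b*x*y*z^3 -
      42935435/38744496*b*x*z^4 + 3518723/38744496*b*y^5 + 81755287/38744496*b*y^4*z +
      308342/269059*b*y^3*z^2 + 6261067/6457416*b*y^2*z^3 - 42127949/38744496*b*y*z^4 -
      46517207/38744496*b*z^5 - 3389305/3228708*c*x^3*y^2 - 4367203/38744496*c*x^3*y*z +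
      29083967/6457416*c*x^3*z^2 - 15885923/6457416*c*x^2*y^3 - 47894951/19372248*c*x^2*y^2*z +
      178524481/38744496*c*x^2*y*z^2 + 1318987/2767464*c*x^2*z^3 - 94463329/38744496*c*x*y^4 -
      15149759/3228708*c*x*y^3*z + 10444801/19372248*c*x*y^2*z^2 + 63573953/38744496*c*x*y*z^3 +
      19234267/5534928*c*x*z^4 - 4394963/5534928*c*y^5 - 730321/226576*c*y^4*z -
      14733983/4304944*c*y^3*z^2 - 7510507/2279088*c*y^2*z^3 - 58181/12914832*c*y*z^4 -
      2574169/4843062*c*z^5) * hu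
    + (26917951/19372248*a*b^2*x*y^2 + 2574316/807177*a*b^2*x*y*z + 7117097/5534928*a*b^2*x*z^2 -
      1923347/1076236*a*b^2*y^3 + 2539025/38744496*a*b^2*y^2*z - 548909/922488*a*b^2*y*z^2 -
      24343979/9686124*a*b^2*z^3 + 1999743/1076236*a*b*c*x*y^2 + 3847631/1383732*a*b*c*x*y*z -
      682629/307496*a*b*c*x*z^2 + 26859019/9686124*a*b*c*y^3 + 7804235/1614354*a*b*c*y^2*z -
      7774653/2152472*a*b*c*y*z^2 - 11647795/9686124*a*b*c*z^3 + 349073/1076236*a*c^2*x*y^2 +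
      20829077/9686124*a*c^2*x*y*z - 77235649/38744496*a*c^2*x*z^2 - 293695/1614354*a*c^2*y^3 +
      23749913/12914832*a*c^2*y^2*z - 43879699/19372248*a*c^2*y*z^2 - 119734/42483*a*c^2*z^3 +
      22475153/19372248*b^3*x*y^2 + 67429903/38744496*b^3*x*y*z + 2323121/12914832*b^3*x*z^2 -
      15669317/19372248*b^3*y^3 - 108721147/38744496*b^3*y^2*z + 381427/691866*b^3*y*z^2 +
      15546815/12914832*b^3*z^3 + 1142977/691866*b^2*c*x*y^2 - 16752241/38744496*b^2*c*x*y*z -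
      141703/16473*b^2*c*x*z^2 + 6237373/19372248*b^2*c*y^3 + 1077641/538118*b^2*c*y^2*z +
      30140623/9686124*b^2*c*y*z^2 + 125566331/38744496*b^2*c*z^3 + 47460523/19372248*b*c^2*x*y^2 +
      17317345/12914832*b*c^2*x*y*z - 243063451/38744496*b*c^2*x*z^2 + 3156669/1076236*b*c^2*y^3 +
      13299697/5534928*b*c^2*y^2*z - 4051637/19372248*b*c^2*y*z^2 + 123185669/38744496*b*c^2*z^3 +
      4052201/6457416*c^3*x*y^2 + 15968347/38744496*c^3*x*y*z - 43001975/9686124*c^3*x*z^2 +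
      1233635/1614354*c^3*y^3 + 1933809/1076236*c^3*y^2*z - 163112/269059*c^3*y*z^2 +
      76493087/38744496*c^3*z^3) * hv
    + (-49021475/38744496*a*x*y^2 - 19434577/9686124*a*x*y*z - 576299/2421531*a*x*z^2 +
      1139965/5534928*a*y^3 + 2486887/12914832*a*y^2*z + 478066/345933*a*y*z^2 +
      76152031/38744496*a*z^3 + 1266235/5534928*b*x*y^2 + 18023339/12914832*b*x*y*z +
      18112309/12914832*b*x*z^2 + 10455295/9686124*b*y^3 + 9981161/4304944*b*y^2*z +
      7822994/2421531*b*y*z^2 + 2284267/1019592*b*z^3 - 21778129/38744496*c*x*y^2 -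
      2212825/2767464*c*x*y*z - 22483849/38744496*c*x*z^2 + 249283/2279088*c*y^3 -
      869053/9686124*c*y^2*z - 1451939/12914832*c*y*z^2 - 207419/1383732*c*z^3) * e₀
    + (917897/1614354*a*x*y^2 + 17365189/12914832*a*x*y*z + 269243/6457416*a*x*z^2 +
      8373829/12914832*a*y^3 + 1927801/2039184*a*y^2*z + 43045517/38744496*a*y*z^2 +
      28525649/19372248*a*z^3 - 3348517/38744496*b*x*y^2 - 840855/4304944*b*x*y*z -
      481546/2421531*b*x*z^2 + 5132479/5534928*b*y^3 + 134649/1076236*b*y^2*z -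
      3091253/38744496*b*y*z^2 + 43372067/19372248*b*z^3 - 15775715/38744496*c*x*y^2 -
      29891171/38744496*c*x*y*z - 11746751/12914832*c*x*z^2 - 4971539/38744496*c*y^3 -
      4902743/4843062*c*y^2*z + 1120643/3228708*c*y*z^2 + 8577389/9686124*c*z^3) * e₁
    + (1931297/5534928*b*x*y*z + 530563/1076236*b*x*z^2 + 58443233/38744496*b*y*z^2 +
      13951949/9686124*b*z^3 - 20369743/38744496*c*x*y^2 - 18748189/12914832*c*x*y*z -
      94797869/38744496*c*x*z^2 + 1070347/4304944*c*y^3 + 984637/2039184*c*y^2*z +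
      33867089/19372248*c*y*z^2 + 87278915/38744496*c*z^3) * e₂
    + (6742499/9686124*a*x*y^2 - 3462665/38744496*a*x*y*z - 6369533/12914832*a*x*z^2 +
      2757199/3228708*a*y^3 + 1865659/5534928*a*y^2*z + 609985/2279088*a*y*z^2 - 198775/807177*a*z^3
      - 43115/1139544*b*x*y^2 - 11223007/38744496*b*x*y*z + 279283/2039184*b*x*z^2 -
      2486887/9686124*b*y^3 - 195635/461244*b*y^2*z - 9681319/38744496*b*y*z^2 +
      61619/38744496*b*z^3 + 1091/2584*c*x*y^2 - 161127/538118*c*x*y*z - 1247951/19372248*c*x*z^2 +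
      361591/1614354*c*y^3 + 4739887/38744496*c*y^2*z + 13200601/19372248*c*y*z^2 +
      16792157/38744496*c*z^3) * f₀
    + (-8376827/19372248*b*z^3 + 276179/3228708*c*y*z^2 - 9309983/19372248*c*z^3) * f₁

theorem first_mul_eq_zero (h : IsCritical ![a, b, c] ![x, y, z]) :
    a * x = 0 ∧ a * y = 0 ∧ a * z = 0 := by
  have hz : z ^ 3 * a ^ 5 = 0 := h.symm.rotate.rotate.cube_mul_pow_five_eq_zero'
  refine ⟨?_, ?_, ?_⟩
  · simpa using h.cube_mul_pow_five_eq_zero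
  · simpa using h.cube_mul_pow_five_eq_zero'
  · simpa [or_comm] using hz

theorem eq_zero_or_eq_zero (h : IsCritical ![a, b, c] ![x, y, z]) :
    ![a, b, c] = 0 ∨ ![x, y, z] = 0 := by
  obtain ⟨hax, hay, haz⟩ := h.first_mul_eq_zero
  obtain ⟨hby, hbz, hbx⟩ := h.rotate.first_mul_eq_zero
  obtain ⟨hcz, hcx, hcy⟩ := h.rotate.rotate.first_mul_eq_zero
  rw [← vecMulVec_eq_zero]
  ext i j
  fin_cases i <;> fin_cases j <;> simp [vecMulVec_apply, *]

end IsCritical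

end

theorem eval_qFirst (a₁ b₁ c₁ a₂ b₂ c₂ : ℂ) :
    eval ![a₁, b₁, c₁, a₂, b₂, c₂] qFirst = conic ![a₁, b₁, c₁] := by
  simp [qFirst, conic]

theorem eval_qSecond (a₁ b₁ c₁ a₂ b₂ c₂ : ℂ) :
    eval ![a₁, b₁, c₁, a₂, b₂, c₂] qSecond = conic ![a₂, b₂, c₂] := by
  simp [qSecond, conic]

theorem jacobian_eq_append (a₁ b₁ c₁ a₂ b₂ c₂ : ℂ) :
    (of fun (i : Fin 3) (k : Fin 6) =>
      eval ![a₁, b₁, c₁, a₂, b₂, c₂] (pderiv k (![qFirst, qSecond, kleinApolarityPoly] i))) =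
    of ![Fin.append (conicGrad ![a₁, b₁, c₁]) (0 : Fin 3 → ℂ),
      Fin.append 0 (conicGrad ![a₂, b₂, c₂]),
      Fin.append (apolarGrad ![a₁, b₁, c₁] ![a₂, b₂, c₂])
        (apolarGrad ![a₂, b₂, c₂] ![a₁, b₁, c₁])] := by
  ext i k
  fin_cases i <;> fin_cases k <;>
    simp [qFirst, qSecond, kleinApolarityPoly, conicGrad, apolarGrad, pderiv_X, Fin.append,
      Fin.addCases] <;> ring

theorem fiber_of_g3_smooth_general (a₁ b₁ c₁ a₂ b₂ c₂ : ℂ)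
    (hu : ![a₁, b₁, c₁] ≠ 0) (hv : ![a₂, b₂, c₂] ≠ 0)
    (h1 : eval ![a₁, b₁, c₁, a₂, b₂, c₂] qFirst = 0)
    (h2 : eval ![a₁, b₁, c₁, a₂, b₂, c₂] qSecond = 0) :
    (Matrix.of fun (i : Fin 3) (k : Fin 6) =>
      eval ![a₁, b₁, c₁, a₂, b₂, c₂]
        (pderiv k (![qFirst, qSecond, kleinApolarityPoly] i))).rank = 3 := by
  rw [jacobian_eq_append]
  refine rank_append_rows_eq_three (conicGrad_ne_zero hu) (conicGrad_ne_zero hv) ?_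
  rintro ⟨hcross, hcross'⟩
  rw [eval_qFirst] at h1
  rw [eval_qSecond] at h2
  exact (IsCritical.mk h1 h2 hcross hcross').eq_zero_or_eq_zero.elim hu hv

/-- **Smoothness of the fiber of `g₃ : 𝒫₃ → ℙ²` over `[1:1:1]`.**
At every point of the affine cone (with both `ℂ³`-components nonzero) of the curve
`{q(u) = q(v) = D(u,v) = 0} ⊂ ℙ²×ℙ²`, the `3×6` Jacobian matrix of `(q(u), q(v), D(u,v))`
has rank `3`. -/
theorem fiber_of_g3_smooth (a₁ b₁ c₁ a₂ b₂ c₂ : ℂ)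
    (hu : ![a₁, b₁, c₁] ≠ 0) (hv : ![a₂, b₂, c₂] ≠ 0)
    (h1 : eval ![a₁, b₁, c₁, a₂, b₂, c₂] qFirst = 0)
    (h2 : eval ![a₁, b₁, c₁, a₂, b₂, c₂] qSecond = 0)
    (h3 : eval ![a₁, b₁, c₁, a₂, b₂, c₂] kleinApolarityPoly = 0) :
    (Matrix.of fun (i : Fin 3) (k : Fin 6) =>
      eval ![a₁, b₁, c₁, a₂, b₂, c₂]
        (pderiv k (![qFirst, qSecond, kleinApolarityPoly] i))).rank = 3 :=
  fiber_of_g3_smooth_general a₁ b₁ c₁ a₂ b₂ c₂ hu hv h1 h2
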